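/- arXiv:2005.14411 — 4 statements merged into one kernel-verified Lean document; each statement's English description precedes it below -/
import Mathlib

section
/- Let Q(N) = E[|α √(μ_IU μ_SI) Σ_{i=1}^N e^{jθ_i} + √μ_SU e^{jφ_SU}|²] where θ₁,…,θ_N are i.i.d. uniform on [-π/2, π/2]. Then Q(N) = β N² + λ N + μ_SU, where β = 4α² μ_IU μ_SI/π² and λ = (1 - 4/π²) α² μ_IU μ_SI + (4α/π) √(μ_IU μ_SI μ_SU) cos φ_SU. -/
open MeasureTheory ProbabilityTheory Real Set

/-! Writing `e^{jθ} = cos θ + j sin θ`, the squared modulus is `(c ∑ cos θᵢ + d cos φ)² +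
(c ∑ sin θᵢ + d sin φ)²`. The mean of the square of a random variable is its variance plus the
square of its mean, and under pairwise independence the variance of `∑ᵢ f(θᵢ)` is `N` times that
of one term. For `θ` uniform on `[-π/2, π/2]`: `E cos θ = 2/π`, `E sin θ = 0`,
`E cos² θ = E sin² θ = 1/2`. -/

section Uniform

variable {Ω : Type*} [MeasurableSpace Ω] {P : Measure Ω} {X : Ω → ℝ}

lemma integral_comp_of_isUniform_Icc {a b : ℝ} (hab : a < b)
    (hX : pdf.IsUniform X (Icc a b) P) {f : ℝ → ℝ} (hf : Measurable f) :
    ∫ ω, f (X ω) ∂P = (b - a)⁻¹ * ∫ x in a..b, f x := by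
  have hvol : volume (Icc a b) = ENNReal.ofReal (b - a) := Real.volume_Icc
  have hXm : AEMeasurable X P :=
    hX.aemeasurable (by simp [hvol, hab]) (by simp [hvol])
  rw [← integral_map hXm hf.aestronglyMeasurable, hX, ProbabilityTheory.cond,
    integral_smul_measure, hvol, ENNReal.toReal_inv, ENNReal.toReal_ofReal (by linarith),
    smul_eq_mul, intervalIntegral.integral_of_le hab.le, integral_Icc_eq_integral_Ioc]

lemma integral_comp_of_isUniform_Icc_pi (hX : pdf.IsUniform X (Icc (-(π / 2)) (π / 2)) P)
    {f : ℝ → ℝ} (hf : Measurable f) :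
    ∫ ω, f (X ω) ∂P = π⁻¹ * ∫ x in -(π / 2)..π / 2, f x := by
  rw [integral_comp_of_isUniform_Icc (by linarith [pi_pos]) hX hf]
  ring_nf

lemma aemeasurable_of_isUniform_Icc_pi (hX : pdf.IsUniform X (Icc (-(π / 2)) (π / 2)) P) :
    AEMeasurable X P :=
  hX.aemeasurable (by simp [pi_pos]) (by simp)

lemma memLp_cos_comp [IsFiniteMeasure P] (hX : AEMeasurable X P) (p : ENNReal) :
    MemLp (fun ω ↦ cos (X ω)) p P :=
  .of_bound (by fun_prop) 1 (ae_of_all _ fun _ ↦ by simpa using abs_cos_le_one _)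

lemma memLp_sin_comp [IsFiniteMeasure P] (hX : AEMeasurable X P) (p : ENNReal) :
    MemLp (fun ω ↦ sin (X ω)) p P :=
  .of_bound (by fun_prop) 1 (ae_of_all _ fun _ ↦ by simpa using abs_sin_le_one _)

lemma integral_cos_of_isUniform_Icc_pi (hX : pdf.IsUniform X (Icc (-(π / 2)) (π / 2)) P) :
    ∫ ω, cos (X ω) ∂P = 2 / π := by
  rw [integral_comp_of_isUniform_Icc_pi hX measurable_cos, integral_cos]
  simp only [sin_neg, sin_pi_div_two]
  ring

lemma integral_sin_of_isUniform_Icc_pi (hX : pdf.IsUniform X (Icc (-(π / 2)) (π / 2)) P) :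
    ∫ ω, sin (X ω) ∂P = 0 := by
  rw [integral_comp_of_isUniform_Icc_pi hX measurable_sin, integral_sin]
  simp

lemma integral_cos_sq_of_isUniform_Icc_pi (hX : pdf.IsUniform X (Icc (-(π / 2)) (π / 2)) P) :
    ∫ ω, cos (X ω) ^ 2 ∂P = 1 / 2 := by
  rw [integral_comp_of_isUniform_Icc_pi hX (measurable_cos.pow_const 2), integral_cos_sq]
  simp only [sin_neg, cos_neg, sin_pi_div_two, cos_pi_div_two]
  field_simp
  ring

lemma integral_sin_sq_of_isUniform_Icc_pi (hX : pdf.IsUniform X (Icc (-(π / 2)) (π / 2)) P) :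
    ∫ ω, sin (X ω) ^ 2 ∂P = 1 / 2 := by
  rw [integral_comp_of_isUniform_Icc_pi hX (measurable_sin.pow_const 2), integral_sin_sq]
  simp only [sin_neg, cos_neg, sin_pi_div_two, cos_pi_div_two]
  field_simp
  ring

lemma variance_cos_of_isUniform_Icc_pi [IsProbabilityMeasure P]
    (hX : pdf.IsUniform X (Icc (-(π / 2)) (π / 2)) P) :
    Var[fun ω ↦ cos (X ω); P] = 1 / 2 - 4 / π ^ 2 := by
  rw [variance_eq_sub (memLp_cos_comp (aemeasurable_of_isUniform_Icc_pi hX) 2)]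
  simp only [Pi.pow_apply]
  rw [integral_cos_sq_of_isUniform_Icc_pi hX, integral_cos_of_isUniform_Icc_pi hX]
  ring

lemma variance_sin_of_isUniform_Icc_pi [IsProbabilityMeasure P]
    (hX : pdf.IsUniform X (Icc (-(π / 2)) (π / 2)) P) :
    Var[fun ω ↦ sin (X ω); P] = 1 / 2 := by
  rw [variance_eq_sub (memLp_sin_comp (aemeasurable_of_isUniform_Icc_pi hX) 2)]
  simp only [Pi.pow_apply]
  rw [integral_sin_sq_of_isUniform_Icc_pi hX, integral_sin_of_isUniform_Icc_pi hX]
  ring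

end Uniform

section SecondMoment

variable {Ω ι : Type*} [MeasurableSpace Ω] {μ : Measure Ω} [Fintype ι] {X : ι → Ω → ℝ}

lemma memLp_const_mul_sum_add (hX : ∀ i, MemLp (X i) 2 μ) [IsFiniteMeasure μ] (c a : ℝ) :
    MemLp (fun ω ↦ c * ∑ i, X i ω + a) 2 μ :=
  ((memLp_finsetSum _ fun i _ ↦ hX i).const_mul c).add (memLp_const a)

lemma integral_sq_const_mul_sum_add [IsProbabilityMeasure μ] (hX : ∀ i, MemLp (X i) 2 μ)
    (hindep : Pairwise fun i j ↦ X i ⟂ᵢ[μ] X j) {m v : ℝ} (hm : ∀ i, μ[X i] = m)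
    (hv : ∀ i, Var[X i; μ] = v) (c a : ℝ) :
    ∫ ω, (c * ∑ i, X i ω + a) ^ 2 ∂μ
      = c ^ 2 * (Fintype.card ι * v) + (c * (Fintype.card ι * m) + a) ^ 2 := by
  have hS : MemLp (fun ω ↦ ∑ i, X i ω) 2 μ := memLp_finsetSum _ fun i _ ↦ hX i
  have hvarS : Var[fun ω ↦ ∑ i, X i ω; μ] = Fintype.card ι * v := by
    rw [← Finset.sum_fn, IndepFun.variance_sum (fun i _ ↦ hX i) fun i _ j _ hij ↦ hindep hij]
    simp [hv]
  have hmeanS : ∫ ω, ∑ i, X i ω ∂μ = Fintype.card ι * m := by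
    rw [integral_finsetSum _ fun i _ ↦ (hX i).integrable one_le_two]
    simp [hm]
  have hvar := variance_eq_sub (memLp_const_mul_sum_add hX c a)
  simp only [Pi.pow_apply] at hvar
  rw [variance_add_const (hS.const_mul c).aestronglyMeasurable, variance_const_mul, hvarS,
    integral_add ((hS.const_mul c).integrable one_le_two) (integrable_const a),
    integral_const_mul, hmeanS] at hvar
  simp only [integral_const, probReal_univ, one_smul] at hvar
  linarith

end SecondMoment

lemma norm_sq_ofReal_mul_sum_exp_add {ι : Type*} (s : Finset ι) (c d φ : ℝ) (θ : ι → ℝ) :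
    ‖(c : ℂ) * ∑ i ∈ s, Complex.exp (Complex.I * θ i) + d * Complex.exp (Complex.I * φ)‖ ^ 2
      = (c * ∑ i ∈ s, cos (θ i) + d * cos φ) ^ 2 + (c * ∑ i ∈ s, sin (θ i) + d * sin φ) ^ 2 := by
  have hexp : ∀ x : ℝ, Complex.exp (Complex.I * x) = cos x + sin x * Complex.I := fun x ↦ by
    rw [mul_comm, Complex.exp_mul_I, ← Complex.ofReal_cos, ← Complex.ofReal_sin]
  have hz : (c : ℂ) * ∑ i ∈ s, Complex.exp (Complex.I * θ i) + d * Complex.exp (Complex.I * φ)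
      = ((c * ∑ i ∈ s, cos (θ i) + d * cos φ : ℝ) : ℂ)
        + ((c * ∑ i ∈ s, sin (θ i) + d * sin φ : ℝ) : ℂ) * Complex.I := by
    simp only [hexp, Finset.sum_add_distrib, ← Finset.sum_mul]
    push_cast
    ring
  rw [hz, Complex.sq_norm, Complex.normSq_add_mul_I]

theorem stmt5_general {Ω : Type*} [MeasurableSpace Ω] (Pm : Measure Ω) [IsProbabilityMeasure Pm]
    (N : ℕ) (θ : Fin N → Ω → ℝ)
    (hindep : iIndepFun θ Pm)
    (hunif : ∀ i, pdf.IsUniform (θ i) (Icc (-(π/2)) (π/2)) Pm)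
    (α μIU μSI μSU φSU : ℝ)
    (hIU : 0 < μIU) (hSI : 0 < μSI) (hSU : 0 < μSU) :
    ∫ ω, (‖
        ((α : ℂ) * (Real.sqrt (μIU * μSI) : ℂ) * ∑ i, Complex.exp (Complex.I * (θ i ω : ℂ)) +
          (Real.sqrt μSU : ℂ) * Complex.exp (Complex.I * (φSU : ℂ)))‖) ^ 2 ∂Pm
      = (4 * α ^ 2 * μIU * μSI / π ^ 2) * N ^ 2 +
          ((1 - 4 / π ^ 2) * α ^ 2 * μIU * μSI +
            (4 * α / π) * Real.sqrt (μIU * μSI * μSU) * Real.cos φSU) * N + μSU := by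
  set c := α * √(μIU * μSI)
  set d := √μSU
  have hθ i := aemeasurable_of_isUniform_Icc_pi (hunif i)
  have hcos i := memLp_cos_comp (hθ i) 2
  have hsin i := memLp_sin_comp (hθ i) 2
  have hpair {f : ℝ → ℝ} (hf : Measurable f) :
      Pairwise fun i j ↦ (fun ω ↦ f (θ i ω)) ⟂ᵢ[Pm] (fun ω ↦ f (θ j ω)) :=
    fun i j hij ↦ (hindep.indepFun hij).comp hf hf
  have hpt ω : ‖(α : ℂ) * (√(μIU * μSI) : ℂ) * ∑ i, Complex.exp (Complex.I * (θ i ω : ℂ)) +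
      (d : ℂ) * Complex.exp (Complex.I * (φSU : ℂ))‖ ^ 2
      = (c * ∑ i, cos (θ i ω) + d * cos φSU) ^ 2 + (c * ∑ i, sin (θ i ω) + d * sin φSU) ^ 2 := by
    rw [← Complex.ofReal_mul]
    exact norm_sq_ofReal_mul_sum_exp_add _ c d φSU _
  simp_rw [hpt]
  rw [integral_add (memLp_const_mul_sum_add hcos c _).integrable_sq
      (memLp_const_mul_sum_add hsin c _).integrable_sq,
    integral_sq_const_mul_sum_add hcos (hpair measurable_cos)
      (fun i ↦ integral_cos_of_isUniform_Icc_pi (hunif i))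
      (fun i ↦ variance_cos_of_isUniform_Icc_pi (hunif i)),
    integral_sq_const_mul_sum_add hsin (hpair measurable_sin)
      (fun i ↦ integral_sin_of_isUniform_Icc_pi (hunif i))
      (fun i ↦ variance_sin_of_isUniform_Icc_pi (hunif i)), Fintype.card_fin]
  have hc2 : c ^ 2 = α ^ 2 * (μIU * μSI) := by
    rw [mul_pow, sq_sqrt (by positivity)]
  have hcd : c * d = α * √(μIU * μSI * μSU) := by
    rw [mul_assoc, ← sqrt_mul (by positivity)]
  have hd2 : d ^ 2 = μSU := sq_sqrt hSU.le
  linear_combination ((N : ℝ) + 4 * ((N : ℝ) ^ 2 - (N : ℝ)) / π ^ 2) * hc2 +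
    (4 * (N : ℝ) / π * cos φSU) * hcd + (cos_sq_add_sin_sq φSU) * d ^ 2 + hd2

/-- Q(N) = E[|α√(μ_IU μ_SI) Σ e^{jθᵢ} + √μ_SU e^{jφ_SU}|²] = βN² + λN + μ_SU
with β = 4α²μ_IU μ_SI/π², λ = (1-4/π²)α²μ_IU μ_SI + (4α/π)√(μ_IU μ_SI μ_SU)cos φ_SU. -/
theorem stmt5 {Ω : Type*} [MeasurableSpace Ω] (Pm : Measure Ω) [IsProbabilityMeasure Pm]
    (N : ℕ) (θ : Fin N → Ω → ℝ) (hm : ∀ i, Measurable (θ i))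
    (hindep : iIndepFun θ Pm)
    (hunif : ∀ i, pdf.IsUniform (θ i) (Icc (-(π/2)) (π/2)) Pm)
    (α μIU μSI μSU φSU : ℝ) (hα0 : 0 < α) (hα1 : α ≤ 1)
    (hIU : 0 < μIU) (hSI : 0 < μSI) (hSU : 0 < μSU) :
    ∫ ω, (‖
        ((α : ℂ) * (Real.sqrt (μIU * μSI) : ℂ) * ∑ i, Complex.exp (Complex.I * (θ i ω : ℂ)) +
          (Real.sqrt μSU : ℂ) * Complex.exp (Complex.I * (φSU : ℂ)))‖) ^ 2 ∂Pm
      = (4 * α ^ 2 * μIU * μSI / π ^ 2) * N ^ 2 +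
          ((1 - 4 / π ^ 2) * α ^ 2 * μIU * μSI +
            (4 * α / π) * Real.sqrt (μIU * μSI * μSU) * Real.cos φSU) * N + μSU :=
  stmt5_general Pm N θ hindep hunif α μIU μSI μSU φSU hIU hSI hSU
end

section
/- For positive reals κ and constants as given, (1/2) log₂(1 + 1/(κ² + 2κ)) > 0; equivalently, log₂(1 + 1/κ) > (1/2) log₂(1 + 2/κ), i.e., the limiting IRS rate with HWI exceeds the limiting DF relay rate with HWI as N → ∞. -/
open Real

/-- (1/2)log₂(1 + 1/(κ²+2κ)) > 0, equivalently log₂(1+1/κ) > (1/2)log₂(1+2/κ):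
the limiting IRS rate with HWI exceeds the limiting DF relay rate as N → ∞. -/
theorem stmt13 (κ : ℝ) (hκ : 0 < κ) :
    0 < (1 / 2) * logb 2 (1 + 1 / (κ ^ 2 + 2 * κ)) ∧
      (1 / 2) * logb 2 (1 + 2 / κ) < logb 2 (1 + 1 / κ) := by
  have hpos : 0 < κ ^ 2 + 2 * κ := by positivity
  constructor
  · have h1 : (1 : ℝ) < 1 + 1 / (κ ^ 2 + 2 * κ) := by
      have : 0 < 1 / (κ ^ 2 + 2 * κ) := by positivity
      linarith
    have := Real.logb_pos one_lt_two h1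
    linarith
  · have hsq : logb 2 (1 + 1 / κ) = (1 / 2) * logb 2 ((1 + 1 / κ) ^ 2) := by
      rw [Real.logb_pow]
      ring
    rw [hsq]
    have hlt : 1 + 2 / κ < (1 + 1 / κ) ^ 2 := by
      have h2 : 0 < 1 / κ ^ 2 := by positivity
      have : (1 + 1 / κ) ^ 2 = 1 + 2 / κ + 1 / κ ^ 2 := by
        field_simp
        ring
      nlinarith
    have h0 : 0 < 1 + 2 / κ := by positivity
    have := Real.logb_lt_logb one_lt_two h0 hlt
    linarith
end

section
/- For all real N > 0 and κ > 0, log₂(1 + 1/κ) > (1/2) log₂(1 + 2N/(κ + κN)); equivalently (1 + 1/κ)² > 1 + 2N/(κ(1+N)); this expresses that the high-power limit of the IRS rate exceeds that of the N-antenna DF relay rate. -/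
open Real

/-- For all N > 0 and κ > 0, log₂(1+1/κ) > (1/2)log₂(1 + 2N/(κ+κN)):
the high-power limit of the IRS rate exceeds that of the N-antenna DF relay rate. -/
theorem stmt14 (N κ : ℝ) (hN : 0 < N) (hκ : 0 < κ) :
    (1 / 2) * logb 2 (1 + 2 * N / (κ + κ * N)) < logb 2 (1 + 1 / κ) := by
  have hden : 0 < κ + κ * N := by positivity
  have hx : 0 < 1 + 2 * N / (κ + κ * N) := by positivity
  have key : 1 + 2 * N / (κ + κ * N) < (1 + 1 / κ) ^ 2 := by
    have h1 : 0 < 1 + N := by linarith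
    have h2 : 2 * N / (κ + κ * N) < 2 / κ := by
      rw [div_lt_div_iff₀ hden hκ]; nlinarith [mul_pos hκ hN]
    have h3 : (1 + 1 / κ) ^ 2 = 1 + 2 / κ + (1/κ)^2 := by ring
    have h4 : 0 < (1/κ)^2 := by positivity
    linarith
  have hlog : logb 2 (1 + 2 * N / (κ + κ * N)) < logb 2 ((1 + 1 / κ) ^ 2) :=
    logb_lt_logb (by norm_num) hx key
  rw [Real.logb_pow] at hlog
  linarith
end

section
/- Suppose κ > 2σ⁴ / [P²(β + λ + μ_SU)² - 2σ²P(β + λ + μ_SU)] with P(β + λ + μ_SU) > 2σ². Then log₂(1 + (β + λ + μ_SU)/(κ(β + λ + μ_SU) + σ²/P)) > (1/2) log₂(1 + 2/κ), i.e., the IRS rate at N = 1 exceeds the DF relay rate limit as N → ∞, so the IRS outperforms the DF relay for all N > 0. -/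
open Real

/-- If κ > 2σ⁴/[P²S² − 2σ²PS] with S = β+λ+μ_SU and PS > 2σ², then the IRS rate at
N = 1 exceeds the limiting DF relay rate (1/2)log₂(1+2/κ). -/
theorem stmt16 (β lam μSU σ2 P κ : ℝ) (hβ : 0 ≤ β) (hlam : 0 ≤ lam) (hμ : 0 ≤ μSU)
    (hS : 0 < β + lam + μSU) (hσ : 0 < σ2) (hP : 0 < P) (hκ0 : 0 < κ)
    (hPS : 2 * σ2 < P * (β + lam + μSU))
    (hκ : 2 * σ2 ^ 2 /
        (P ^ 2 * (β + lam + μSU) ^ 2 - 2 * σ2 * P * (β + lam + μSU)) < κ) :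
    (1 / 2) * logb 2 (1 + 2 / κ) <
      logb 2 (1 + (β + lam + μSU) / (κ * (β + lam + μSU) + σ2 / P)) := by
  set S := β + lam + μSU with hSdef
  have hden : 0 < P ^ 2 * S ^ 2 - 2 * σ2 * P * S := by nlinarith
  have hκkey : 2 * σ2 ^ 2 < κ * (P ^ 2 * S ^ 2 - 2 * σ2 * P * S) :=
    (div_lt_iff₀ hden).mp hκ
  have hD : 0 < κ * S + σ2 / P := by positivity
  have hx : 0 < S / (κ * S + σ2 / P) := div_pos hS hD
  have h1 : 0 < 1 + 2 / κ := by positivity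
  have key : 1 + 2 / κ < (1 + S / (κ * S + σ2 / P)) ^ 2 := by
    have h2 : 1 + S / (κ * S + σ2 / P) = (κ * S + σ2 / P + S) / (κ * S + σ2 / P) := by
      field_simp
    have h3 : 1 + 2 / κ = (κ + 2) / κ := by field_simp
    rw [h2, h3, div_pow, div_lt_div_iff₀ hκ0 (by positivity)]
    have ht2 : 2 * (σ2 / P) ^ 2 < κ * (S ^ 2 - 2 * (σ2 / P) * S) := by
      rw [div_pow, mul_div_assoc', div_lt_iff₀ (by positivity : (0:ℝ) < P ^ 2)]
      have : κ * (S ^ 2 - 2 * (σ2 / P) * S) * P ^ 2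
          = κ * (P ^ 2 * S ^ 2 - 2 * σ2 * P * S) := by
        field_simp
      rw [this]; linarith
    nlinarith [ht2, mul_pos hκ0 hS, div_pos hσ hP]
  have hlog := logb_lt_logb (by norm_num : (1:ℝ) < 2) h1 key
  rw [logb_pow] at hlog
  linarith
end
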